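/- Let X be a WQO and v, w ∈ X*, a, b ∈ X. Then in (X*, ≤*): ↑(v·a) ⊙ ↑(b·w) = ↑(v·a·b·w) ∪ (↑v)·(↑_X a ∩ ↑_X b)·(↑w), where S ⊙ T := complement of (complement(S) · complement(T)), and (↑_X a ∩ ↑_X b) is identified with the set of length-1 sequences whose letter is above both a and b. -/

import Mathlib

/-!
Cut a word `u ∈ ↑(va) ⊙ ↑(bw)` just before the last letter `c` of its shortest prefix `p·c`
dominating `va`. Then `p ≥ v`, `c ≥ a`, and `p` does not dominate `va`, so the cut `u = p · (c·q)`
forces `c·q ≥ bw`: either `c` is matched with `b`, so `u ∈ ↑v · (↑a ∩ ↑b) · ↑w`, or `bw` embeds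
into `q` and `u = (p·c)·q ≥ va·bw`. Conversely, if `u` has a prefix `s ≥ x` and a suffix `t ≥ y`
overlapping in at most one letter, every cut of `u` leaves `s` on the left or `t` on the right.
-/

def Hig {X : Type*} [Preorder X] : List X → List X → Prop :=
  List.SublistForall₂ (· ≤ ·)

def upSeq {X : Type*} [Preorder X] (u : List X) : Set (List X) := {w | Hig u w}

def conc {X : Type*} (U V : Set (List X)) : Set (List X) :=
  {w | ∃ u ∈ U, ∃ v ∈ V, w = u ++ v}

/-- `S ⊙ T = ¬(¬S · ¬T)`. -/
def odot {X : Type*} (S T : Set (List X)) : Set (List X) :=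
  (conc Sᶜ Tᶜ)ᶜ

theorem mem_odot_iff {X : Type*} {S T : Set (List X)} {u : List X} :
    u ∈ odot S T ↔ ∀ u₁ u₂, u = u₁ ++ u₂ → u₁ ∈ S ∨ u₂ ∈ T := by
  simp only [odot, conc, Set.mem_compl_iff, Set.mem_ofPred_eq, not_exists, not_and]
  refine forall_congr' fun u₁ => ⟨fun h u₂ hu => ?_, fun h hS u₂ hT hu => ?_⟩
  · by_contra! hc
    exact h hc.1 u₂ hc.2 hu
  · exact (h u₂ hu).elim hS hT

open List

namespace Hig

variable {X : Type*} [Preorder X] {x y l l' : List X}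

theorem length_le (h : Hig x l) : x.length ≤ l.length := by
  obtain ⟨m, hm, hml⟩ := List.sublistForall₂_iff.mp h
  exact hm.length_eq ▸ hml.length_le

theorem trans_sublist (h : Hig x l) (hl : l <+ l') : Hig x l' := by
  obtain ⟨m, hm, hml⟩ := List.sublistForall₂_iff.mp h
  exact List.sublistForall₂_iff.mpr ⟨m, hm, hml.trans hl⟩

theorem append (hx : Hig x l) (hy : Hig y l') : Hig (x ++ y) (l ++ l') := by
  obtain ⟨m, hm, hml⟩ := List.sublistForall₂_iff.mp hx
  obtain ⟨m', hm', hml'⟩ := List.sublistForall₂_iff.mp hy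
  exact List.sublistForall₂_iff.mpr ⟨m ++ m', List.rel_append hm hm', hml.append hml'⟩

theorem singleton {a c : X} (h : a ≤ c) : Hig [a] [c] :=
  .cons h .nil

theorem exists_eq_append (h : Hig (x ++ y) l) :
    ∃ l₁ l₂, l = l₁ ++ l₂ ∧ Hig x l₁ ∧ Hig y l₂ := by
  obtain ⟨m, hm, hml⟩ := List.sublistForall₂_iff.mp h
  have hx : List.Forall₂ (· ≤ ·) x (m.take x.length) := by
    simpa using List.forall₂_take x.length hm
  have hy : List.Forall₂ (· ≤ ·) y (m.drop x.length) := by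
    simpa using List.forall₂_drop x.length hm
  rw [← List.take_append_drop x.length m] at hml
  obtain ⟨l₁, l₂, rfl, hl₁, hl₂⟩ := List.append_sublist_iff.mp hml
  exact ⟨l₁, l₂, rfl, List.sublistForall₂_iff.mpr ⟨_, hx, hl₁⟩,
    List.sublistForall₂_iff.mpr ⟨_, hy, hl₂⟩⟩

theorem reverse_iff : Hig x.reverse l.reverse ↔ Hig x l := by
  simp only [Hig, List.sublistForall₂_iff]
  constructor
  · rintro ⟨m, hm, hml⟩
    exact ⟨m.reverse, List.forall₂_reverse_iff.mp (by simpa using hm),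
      List.reverse_sublist.mp (by simpa using hml)⟩
  · rintro ⟨m, hm, hml⟩
    exact ⟨m.reverse, List.forall₂_reverse_iff.mpr hm, List.reverse_sublist.mpr hml⟩

theorem of_append_singleton {a d : X} (h : Hig (x ++ [a]) (l ++ [d])) :
    Hig (x ++ [a]) l ∨ Hig x l ∧ a ≤ d := by
  rw [← reverse_iff] at h ⊢
  rw [← reverse_iff (x := x)]
  simp only [List.reverse_append, List.reverse_singleton, List.singleton_append] at h ⊢
  cases h with
  | cons had hxl => exact .inr ⟨hxl, had⟩
  | cons_right hxl => exact .inl hxl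

theorem exists_shortest_prefix {a : X} (h : Hig (x ++ [a]) l) :
    ∃ p c q, l = p ++ c :: q ∧ Hig x p ∧ a ≤ c ∧ ¬ Hig (x ++ [a]) p := by
  induction l using List.reverseRecOn with
  | nil => simpa using h.length_le
  | append_singleton l d ih =>
    by_cases hl : Hig (x ++ [a]) l
    · obtain ⟨p, c, q, rfl, hxp, hac, hp⟩ := ih hl
      exact ⟨p, c, q ++ [d], by simp, hxp, hac, hp⟩
    · obtain ⟨hxl, had⟩ := (of_append_singleton h).resolve_left hl
      exact ⟨l, d, [], rfl, hxl, had, hl⟩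

end Hig

section odot

variable {X : Type*} [Preorder X]

theorem mem_upSeq {x u : List X} : u ∈ upSeq x ↔ Hig x u := Iff.rfl

theorem mem_odot_upSeq_of_prefix_of_suffix {x y s t u : List X} (hs : s <+: u) (ht : t <:+ u)
    (hlen : s.length + t.length ≤ u.length + 1) (hxs : Hig x s) (hyt : Hig y t) :
    u ∈ odot (upSeq x) (upSeq y) := by
  rw [mem_odot_iff]
  rintro u₁ u₂ rfl
  by_cases h : s.length ≤ u₁.length
  · exact .inl (hxs.trans_sublist
      (List.prefix_of_prefix_length_le hs (List.prefix_append u₁ u₂) h).sublist)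
  · refine .inr (hyt.trans_sublist
      (List.suffix_of_suffix_length_le ht (List.suffix_append u₁ u₂) ?_).sublist)
    simp only [List.length_append] at hlen
    omega

theorem upSeq_append_subset_odot (x y : List X) :
    upSeq (x ++ y) ⊆ odot (upSeq x) (upSeq y) := by
  intro u hu
  obtain ⟨s, t, rfl, hxs, hyt⟩ := Hig.exists_eq_append hu
  exact mem_odot_upSeq_of_prefix_of_suffix (List.prefix_append s t) (List.suffix_append s t)
    (by simp) hxs hyt

theorem conc_upSeq_meet_subset_odot (v w : List X) (a b : X) :
    conc (upSeq v) (conc {l : List X | ∃ c : X, a ≤ c ∧ b ≤ c ∧ l = [c]} (upSeq w)) ⊆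
      odot (upSeq (v ++ [a])) (upSeq (b :: w)) := by
  rintro _ ⟨p, hvp, _, ⟨_, ⟨c, hac, hbc, rfl⟩, q, hwq, rfl⟩, rfl⟩
  exact mem_odot_upSeq_of_prefix_of_suffix (s := p ++ [c]) (t := c :: q)
    ⟨q, by simp⟩ ⟨p, by simp⟩ (by simp; omega) (hvp.append (.singleton hac)) (.cons hbc hwq)

theorem odot_upSeq_subset (v w : List X) (a b : X) :
    odot (upSeq (v ++ [a])) (upSeq (b :: w)) ⊆
      upSeq (v ++ [a, b] ++ w) ∪
        conc (upSeq v) (conc {l : List X | ∃ c : X, a ≤ c ∧ b ≤ c ∧ l = [c]} (upSeq w)) := by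
  intro u hu
  rw [mem_odot_iff] at hu
  have hvau : Hig (v ++ [a]) u :=
    (hu u [] (by simp)).resolve_right fun h => by simpa using h.length_le
  obtain ⟨p, c, q, rfl, hvp, hac, hp⟩ := hvau.exists_shortest_prefix
  cases (hu p (c :: q) rfl).resolve_left hp with
  | cons hbc hwq => exact .inr ⟨p, hvp, c :: q, ⟨[c], ⟨c, hac, hbc, rfl⟩, q, hwq, rfl⟩, rfl⟩
  | cons_right hbwq =>
    left
    simpa [mem_upSeq] using (hvp.append (.singleton hac)).append hbwq

end odot

theorem odot_of_filters_general {X : Type*} [Preorder X]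
    (v w : List X) (a b : X) :
    odot (upSeq (v ++ [a])) (upSeq (b :: w)) =
      upSeq (v ++ [a, b] ++ w) ∪
        conc (upSeq v) (conc {l : List X | ∃ c : X, a ≤ c ∧ b ≤ c ∧ l = [c]} (upSeq w)) := by
  refine (odot_upSeq_subset v w a b).antisymm (Set.union_subset ?_ ?_)
  · simpa using upSeq_append_subset_odot (v ++ [a]) (b :: w)
  · exact conc_upSeq_meet_subset_odot v w a b

theorem odot_of_filters {X : Type*} [Preorder X]
    (hwqo : ∀ f : ℕ → X, ∃ i j : ℕ, i < j ∧ f i ≤ f j)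
    (v w : List X) (a b : X) :
    odot (upSeq (v ++ [a])) (upSeq (b :: w)) =
      upSeq (v ++ [a, b] ++ w) ∪
        conc (upSeq v) (conc {l : List X | ∃ c : X, a ≤ c ∧ b ≤ c ∧ l = [c]} (upSeq w)) :=
  odot_of_filters_general v w a b
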